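/- arXiv:1807.00091 — 4 statements merged into one kernel-verified Lean document; each statement's English description precedes it below -/
import Mathlib

section
/- Let Λ₁ and Λ_x be N×N real diagonal matrices with diagonal entries λ₁(k) = -(4/h²)sin²(kπ/N) and λ_x(k) = -j(k)² respectively (where j(k) = k for k ≤ N/2, j(k) = k-N for k > N/2, and h = 2π/N). Then for any vector v ∈ ℂᴺ, (4/π²)⟨-Λ_x v, v⟩ ≤ ⟨-Λ₁ v, v⟩ ≤ ⟨-Λ_x v, v⟩. -/
open Real in
lemma sin_sq_two_sided {x : ℝ} (hx : |x| ≤ π / 2) :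
    4 / π ^ 2 * x ^ 2 ≤ Real.sin x ^ 2 ∧ Real.sin x ^ 2 ≤ x ^ 2 := by
  refine ⟨?_, Real.sin_sq_le_sq⟩
  have h1 := Real.mul_le_sin (abs_nonneg x) hx
  have h2 : (2 / π * |x|) ^ 2 ≤ Real.sin |x| ^ 2 := by
    have hnn : 0 ≤ 2 / π * |x| :=
      mul_nonneg (div_nonneg (by norm_num) Real.pi_pos.le) (abs_nonneg x)
    exact pow_le_pow_left₀ hnn h1 2
  have h3 : Real.sin |x| ^ 2 = Real.sin x ^ 2 := by
    rcases abs_choice x with h | h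
    · rw [h]
    · rw [h, Real.sin_neg, neg_sq]
  calc 4 / π ^ 2 * x ^ 2 = (2 / π * |x|) ^ 2 := by rw [mul_pow, div_pow, sq_abs]; ring
    _ ≤ Real.sin |x| ^ 2 := h2
    _ = Real.sin x ^ 2 := h3

open Real in
lemma perk_bounds (N : ℕ) (hN : 0 < N) (k : Fin N) :
    let J : ℝ := if (k : ℕ) ≤ N / 2 then ((k : ℕ) : ℝ) else ((k : ℕ) : ℝ) - N
    4 / π ^ 2 * J ^ 2 ≤ (N : ℝ) ^ 2 / π ^ 2 * Real.sin (((k : ℕ) : ℝ) * π / N) ^ 2 ∧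
      (N : ℝ) ^ 2 / π ^ 2 * Real.sin (((k : ℕ) : ℝ) * π / N) ^ 2 ≤ J ^ 2 := by
  intro J
  have hNR : (0 : ℝ) < N := Nat.cast_pos.mpr hN
  set x : ℝ := J * π / N with hxdef
  have hsin : Real.sin (((k : ℕ) : ℝ) * π / N) ^ 2 = Real.sin x ^ 2 := by
    by_cases h : (k : ℕ) ≤ N / 2
    · simp [hxdef, J, h]
    · have : x = ((k : ℕ) : ℝ) * π / N - π := by
        simp only [hxdef, J, if_neg h]
        field_simp
      rw [this, Real.sin_sub_pi, neg_sq]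
  have hxabs : |x| ≤ π / 2 := by
    by_cases h : (k : ℕ) ≤ N / 2
    · have h2 : 2 * (k : ℕ) ≤ N := by omega
      have h2R : ((k : ℕ) : ℝ) ≤ N / 2 := by
        have := Nat.cast_le (α := ℝ).mpr h2; push_cast at this; linarith
      have hx0 : 0 ≤ x := by
        simp only [hxdef, J, if_pos h]
        positivity
      rw [abs_of_nonneg hx0]
      simp only [hxdef, J, if_pos h]
      rw [div_le_div_iff₀ hNR (by norm_num)]
      nlinarith [Real.pi_pos]
    · have hk : (k : ℕ) < N := k.2
      have h2 : N ≤ 2 * (k : ℕ) := by omega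
      have h2R : (N : ℝ) / 2 ≤ ((k : ℕ) : ℝ) := by
        have := Nat.cast_le (α := ℝ).mpr h2; push_cast at this; linarith
      have hkR : ((k : ℕ) : ℝ) ≤ N := by exact_mod_cast hk.le
      have hx0 : x ≤ 0 := by
        simp only [hxdef, J, if_neg h]
        apply div_nonpos_of_nonpos_of_nonneg _ hNR.le
        nlinarith [Real.pi_pos]
      rw [abs_of_nonpos hx0]
      simp only [hxdef, J, if_neg h]
      have heq : -((((k : ℕ) : ℝ) - N) * π / N) = ((N : ℝ) - (k : ℕ)) * π / N := by ring
      rw [heq, div_le_div_iff₀ hNR (by norm_num)]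
      nlinarith [Real.pi_pos]
  obtain ⟨hlo, hhi⟩ := sin_sq_two_sided hxabs
  have hx2 : x ^ 2 = J ^ 2 * π ^ 2 / N ^ 2 := by rw [hxdef]; field_simp
  have hpi := Real.pi_pos
  rw [hsin]
  constructor
  · have he : 4 / π ^ 2 * J ^ 2 = (N : ℝ) ^ 2 / π ^ 2 * (4 / π ^ 2 * x ^ 2) := by
      rw [hx2]; field_simp
    rw [he]
    exact mul_le_mul_of_nonneg_left hlo (by positivity)
  · have he : J ^ 2 = (N : ℝ) ^ 2 / π ^ 2 * x ^ 2 := by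
      rw [hx2]; field_simp
    rw [he]
    exact mul_le_mul_of_nonneg_left hhi (by positivity)

/-- Comparison of the quadratic forms of the diagonal finite-difference and
Fourier second-derivative eigenvalue matrices:
`(4/π²)⟨-Λ_x v, v⟩ ≤ ⟨-Λ₁ v, v⟩ ≤ ⟨-Λ_x v, v⟩`. -/
theorem diag_eig_quadratic_form (N : ℕ) (hN : 0 < N) (v : Fin N → ℂ) :
    let hgrid : ℝ := 2 * Real.pi / N
    let lam1 : Fin N → ℝ :=
      fun k => -(4 / hgrid ^ 2) * Real.sin (((k : ℕ) : ℝ) * Real.pi / N) ^ 2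
    let j : Fin N → ℝ :=
      fun k => if (k : ℕ) ≤ N / 2 then ((k : ℕ) : ℝ) else ((k : ℕ) : ℝ) - N
    let lamx : Fin N → ℝ := fun k => -(j k) ^ 2
    (4 / Real.pi ^ 2) * ∑ k, (-(lamx k)) * Complex.normSq (v k)
        ≤ ∑ k, (-(lam1 k)) * Complex.normSq (v k) ∧
    ∑ k, (-(lam1 k)) * Complex.normSq (v k)
        ≤ ∑ k, (-(lamx k)) * Complex.normSq (v k) := by
  intro hgrid lam1 j lamx
  have hNR : (0 : ℝ) < N := Nat.cast_pos.mpr hN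
  have hgridval : 4 / hgrid ^ 2 = (N : ℝ) ^ 2 / Real.pi ^ 2 := by
    simp only [hgrid]
    rw [div_pow]
    rw [div_div_eq_mul_div, div_eq_div_iff (by positivity) (by positivity)]
    ring
  have hlam1 : ∀ k, -(lam1 k) = (N : ℝ) ^ 2 / Real.pi ^ 2 *
      Real.sin (((k : ℕ) : ℝ) * Real.pi / N) ^ 2 := by
    intro k; simp only [lam1, hgridval]; ring
  have hlamx : ∀ k, -(lamx k) = (j k) ^ 2 := by intro k; simp [lamx]
  constructor
  · rw [Finset.mul_sum]
    apply Finset.sum_le_sum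
    intro k _
    rw [hlam1, hlamx, ← mul_assoc]
    apply mul_le_mul_of_nonneg_right _ (Complex.normSq_nonneg _)
    exact (perk_bounds N hN k).1
  · apply Finset.sum_le_sum
    intro k _
    rw [hlam1, hlamx]
    apply mul_le_mul_of_nonneg_right _ (Complex.normSq_nonneg _)
    exact (perk_bounds N hN k).2
end

section
/- Let u be a smooth periodic solution of i∂_t u + Δu + βe^{-2γt}|u|²u = 0 on the periodic box Ω ⊂ ℝ³. Then E(t) = ∫_Ω |∇u|² dx - (β/2)e^{-2γt}∫_Ω |u|⁴ dx - γβ∫₀ᵗ e^{-2γν}∫_Ω |u(ν,x)|⁴ dx dν is constant in time. -/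
open MeasureTheory Complex
set_option maxHeartbeats 2000000

noncomputable def Rp (z w : ℂ) : ℝ := z.re * w.re + z.im * w.im

lemma Rp_symm (z w : ℂ) : Rp z w = Rp w z := by unfold Rp; ring

lemma hasDerivAt_normSq_comp {z : ℝ → ℂ} {z' : ℂ} {t : ℝ} (h : HasDerivAt z z' t) :
    HasDerivAt (fun s => Complex.normSq (z s)) (2 * Rp z' (z t)) t := by
  have hre : HasDerivAt (fun s => (z s).re) z'.re t :=
    (Complex.reCLM.hasFDerivAt.comp_hasDerivAt t h)
  have him : HasDerivAt (fun s => (z s).im) z'.im t :=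
    (Complex.imCLM.hasFDerivAt.comp_hasDerivAt t h)
  have := (hre.mul hre).add (him.mul him)
  have h2 : (fun s => (z s).re * (z s).re + (z s).im * (z s).im)
      = fun s => Complex.normSq (z s) := by
    funext s; simp [Complex.normSq_apply]
  rw [show (((fun s => (z s).re) * fun s => (z s).re) + (fun s => (z s).im) * fun s => (z s).im) = fun s => Complex.normSq (z s) from h2] at this
  refine this.congr_deriv ?_
  unfold Rp; ring


lemma hasDerivAt_setIntegral_param {F F' : ℝ → (Fin 3 → ℝ) → ℝ} {Ω : Set (Fin 3 → ℝ)}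
    (hΩc : IsCompact Ω) (hΩm : MeasurableSet Ω)
    (hF : Continuous fun p : ℝ × (Fin 3 → ℝ) => F p.1 p.2)
    (hF' : Continuous fun p : ℝ × (Fin 3 → ℝ) => F' p.1 p.2)
    (hd : ∀ t x, HasDerivAt (fun s => F s x) (F' t x) t) (t₀ : ℝ) :
    HasDerivAt (fun t => ∫ x in Ω, F t x) (∫ x in Ω, F' t₀ x) t₀ := by
  obtain ⟨C, hC⟩ := (hΩc.prod (isCompact_Icc (a := t₀ - 1) (b := t₀ + 1))).exists_bound_of_continuousOn
    (f := fun q : (Fin 3 → ℝ) × ℝ => F' q.2 q.1)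
    ((hF'.comp (continuous_snd.prodMk continuous_fst)).continuousOn)
  refine (hasDerivAt_integral_of_dominated_loc_of_deriv_le (s := Metric.ball t₀ 1) (Metric.ball_mem_nhds t₀ one_pos)
    (F := F) (F' := F') (bound := fun _ => C) (μ := volume.restrict Ω) ?_ ?_ ?_ ?_ ?_ ?_).2
  · exact Filter.Eventually.of_forall fun t =>
      ((hF.comp (Continuous.prodMk_right t)).aestronglyMeasurable)
  · exact ((hF.comp (Continuous.prodMk_right t₀)).continuousOn).integrableOn_compact hΩc
  · exact ((hF'.comp (Continuous.prodMk_right t₀)).aestronglyMeasurable)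
  · refine (ae_restrict_mem hΩm).mono fun x hx => fun s hs => ?_
    have hs' : s ∈ Set.Icc (t₀ - 1) (t₀ + 1) := by
      have := Metric.mem_ball.1 hs
      rw [Real.dist_eq] at this
      constructor <;> [linarith [abs_lt.1 this |>.1]; linarith [abs_lt.1 this |>.2]]
    exact hC (x, s) ⟨hx, hs'⟩
  · exact integrableOn_const hΩc.measure_lt_top.ne
  · exact Filter.Eventually.of_forall fun x => fun s _ => hd s x



open MeasureTheory

/-- Coordinate Laplacian on `ℝ³`. -/
noncomputable def lap (f : (Fin 3 → ℝ) → ℂ) (x : Fin 3 → ℝ) : ℂ :=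
  ∑ i : Fin 3, iteratedDeriv 2 (fun s : ℝ => f (Function.update x i s)) (x i)

/-- Partial derivative in coordinate `i`. -/
noncomputable def pd (i : Fin 3) (f : (Fin 3 → ℝ) → ℂ) (x : Fin 3 → ℝ) : ℂ :=
  deriv (fun s : ℝ => f (Function.update x i s)) (x i)

/-- Energy conservation: for a smooth periodic solution of
`i∂_t u + Δu + βe^{-2γt}|u|²u = 0`, the modified energy
`E(t) = ∫|∇u|² − (β/2)e^{-2γt}∫|u|⁴ − γβ∫₀ᵗ e^{-2γν}∫|u|⁴` is constant. -/
theorem damped_NLS_energy_conservation (u : ℝ → (Fin 3 → ℝ) → ℂ) (β γ : ℝ) (hγ : 0 < γ)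
    (L : Fin 3 → ℝ) (hL : ∀ i, 0 < L i)
    (hsmooth : ContDiff ℝ (⊤ : ℕ∞) (fun p : ℝ × (Fin 3 → ℝ) => u p.1 p.2))
    (hper : ∀ t x i, u t (Function.update x i (x i + L i)) = u t x)
    (hpde : ∀ t x, Complex.I * deriv (fun s => u s x) t + lap (u t) x
      + (β : ℂ) * Complex.exp (-2 * (γ : ℂ) * t)
          * ((‖u t x‖ : ℂ)) ^ 2 * u t x = 0) :
    ∀ t : ℝ, 0 ≤ t →
      (∫ x in Set.univ.pi fun i => Set.Icc (0 : ℝ) (L i),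
          ∑ i : Fin 3, Complex.normSq (pd i (u t) x))
        - (β / 2) * Real.exp (-2 * γ * t)
            * (∫ x in Set.univ.pi fun i => Set.Icc (0 : ℝ) (L i), (‖u t x‖) ^ 4)
        - γ * β * (∫ ν in Set.Icc (0 : ℝ) t, Real.exp (-2 * γ * ν)
            * ∫ x in Set.univ.pi fun i => Set.Icc (0 : ℝ) (L i), (‖u ν x‖) ^ 4)
      = (∫ x in Set.univ.pi fun i => Set.Icc (0 : ℝ) (L i),
          ∑ i : Fin 3, Complex.normSq (pd i (u 0) x))
        - (β / 2) * Real.exp (-2 * γ * 0)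
            * (∫ x in Set.univ.pi fun i => Set.Icc (0 : ℝ) (L i), (‖u 0 x‖) ^ 4)
        - γ * β * (∫ ν in Set.Icc (0 : ℝ) (0 : ℝ), Real.exp (-2 * γ * ν)
            * ∫ x in Set.univ.pi fun i => Set.Icc (0 : ℝ) (L i), (‖u ν x‖) ^ 4) := by
  classical
  -- basic objects
  set Ω : Set (Fin 3 → ℝ) := Set.univ.pi fun i => Set.Icc (0 : ℝ) (L i) with hΩdef
  have hΩIcc : Ω = Set.Icc (0 : Fin 3 → ℝ) L := by
    rw [hΩdef, ← Set.pi_univ_Icc]; rfl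
  have hΩc : IsCompact Ω := by rw [hΩIcc]; exact isCompact_Icc
  have hΩm : MeasurableSet Ω := by rw [hΩIcc]; exact measurableSet_Icc
  set U : ℝ × (Fin 3 → ℝ) → ℂ := fun p => u p.1 p.2 with hUdef
  have hUdiff : Differentiable ℝ U := hsmooth.differentiable (by simp)
  set F1 : ℝ × (Fin 3 → ℝ) → (ℝ × (Fin 3 → ℝ)) →L[ℝ] ℂ := fderiv ℝ U with hF1def
  have hF1sm : ContDiff ℝ (⊤ : ℕ∞) F1 := hsmooth.fderiv_right (by simp)
  have hF1diff : Differentiable ℝ F1 := hF1sm.differentiable (by simp)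
  set ut : ℝ → (Fin 3 → ℝ) → ℂ := fun t x => F1 (t, x) (1, 0) with hutdef
  set di : Fin 3 → ℝ → (Fin 3 → ℝ) → ℂ :=
    fun i t x => F1 (t, x) (0, Pi.single i 1) with hdidef
  set dti : Fin 3 → ℝ → (Fin 3 → ℝ) → ℂ :=
    fun i t x => fderiv ℝ F1 (t, x) (1, 0) (0, Pi.single i 1) with hdtidef
  set dii : Fin 3 → ℝ → (Fin 3 → ℝ) → ℂ :=
    fun i t x => fderiv ℝ F1 (t, x) (0, Pi.single i 1) (0, Pi.single i 1) with hdiidef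
  have hsymm : ∀ p v w, fderiv ℝ F1 p v w = fderiv ℝ F1 p w v := fun p v w =>
    second_derivative_symmetric (fun q => (hUdiff q).hasFDerivAt) ((hF1diff p).hasFDerivAt) v w
  -- pointwise derivative facts
  have hupdate : ∀ (x : Fin 3 → ℝ) (i : Fin 3) (s : ℝ),
      HasDerivAt (fun s' : ℝ => Function.update x i s') (Pi.single i 1) s := by
    intro x i s
    have h := (hasFDerivAt_update (𝕜 := ℝ) x (s : ℝ) (i := i)).hasDerivAt
    refine h.congr_deriv ?_
    funext j
    simp [ContinuousLinearMap.pi_apply, Pi.single_apply]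
    split <;> simp
  have hut : ∀ t x, HasDerivAt (fun s => u s x) (ut t x) t := by
    intro t x
    have hp : HasDerivAt (fun s : ℝ => (s, x)) ((1 : ℝ), (0 : Fin 3 → ℝ)) t :=
      (hasDerivAt_id t).prodMk (hasDerivAt_const t x)
    exact ((hUdiff (t, x)).hasFDerivAt).comp_hasDerivAt t hp
  have hdI : ∀ i t x s, HasDerivAt (fun s' => u t (Function.update x i s'))
      (di i t (Function.update x i s)) s := by
    intro i t x s
    have hp : HasDerivAt (fun s' : ℝ => (t, Function.update x i s'))
        ((0 : ℝ), Pi.single i 1) s :=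
      (hasDerivAt_const s t).prodMk (hupdate x i s)
    exact ((hUdiff (t, Function.update x i s)).hasFDerivAt).comp_hasDerivAt s hp
  have hpd : ∀ t x i, pd i (u t) x = di i t x := by
    intro t x i
    have := (hdI i t x (x i)).deriv
    rw [Function.update_eq_self] at this
    exact this
  have hF1v : ∀ (v : ℝ × (Fin 3 → ℝ)) (p : ℝ × (Fin 3 → ℝ)),
      HasFDerivAt (fun q => F1 q v)
        ((ContinuousLinearMap.apply ℝ ℂ v).comp (fderiv ℝ F1 p)) p := by
    intro v p
    exact (ContinuousLinearMap.apply ℝ ℂ v).hasFDerivAt.comp p (hF1diff p).hasFDerivAt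
  have hdspace : ∀ i t x s, HasDerivAt (fun s' => di i t (Function.update x i s'))
      (fderiv ℝ F1 (t, Function.update x i s) (0, Pi.single i 1) (0, Pi.single i 1)) s := by
    intro i t x s
    have hp : HasDerivAt (fun s' : ℝ => (t, Function.update x i s'))
        ((0 : ℝ), Pi.single i 1) s :=
      (hasDerivAt_const s t).prodMk (hupdate x i s)
    exact (hF1v (0, Pi.single i 1) (t, Function.update x i s)).comp_hasDerivAt s hp
  have hlap : ∀ t x, lap (u t) x = ∑ i, dii i t x := by
    intro t x
    unfold lap
    refine Finset.sum_congr rfl fun i _ => ?_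
    rw [show (2 : ℕ) = 1 + 1 from rfl, iteratedDeriv_succ, iteratedDeriv_one]
    have hd1 : (deriv fun s : ℝ => u t (Function.update x i s))
        = fun s => di i t (Function.update x i s) := by
      funext s; exact (hdI i t x s).deriv
    rw [hd1]
    have := (hdspace i t x (x i)).deriv
    rw [Function.update_eq_self] at this
    rw [this]
  have hdti : ∀ i t x, HasDerivAt (fun s => di i s x) (dti i t x) t := by
    intro i t x
    have hp : HasDerivAt (fun s : ℝ => (s, x)) ((1 : ℝ), (0 : Fin 3 → ℝ)) t :=
      (hasDerivAt_id t).prodMk (hasDerivAt_const t x)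
    exact (hF1v (0, Pi.single i 1) (t, x)).comp_hasDerivAt t hp
  -- continuity facts
  have hmk : Continuous fun p : ℝ × (Fin 3 → ℝ) => (p.1, p.2) :=
    continuous_fst.prodMk continuous_snd
  have hF1vC : ∀ v : ℝ × (Fin 3 → ℝ), Continuous fun p => F1 p v := fun v =>
    (ContinuousLinearMap.apply ℝ ℂ v).continuous.comp hF1sm.continuous
  have hF2sm : ContDiff ℝ (⊤ : ℕ∞) (fderiv ℝ F1) := hF1sm.fderiv_right (by simp)
  have hF2vC : ∀ v w : ℝ × (Fin 3 → ℝ), Continuous fun p => fderiv ℝ F1 p v w := fun v w =>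
    (ContinuousLinearMap.apply ℝ ℂ w).continuous.comp
      ((ContinuousLinearMap.apply ℝ _ v).continuous.comp hF2sm.continuous)
  have hutC : Continuous fun p : ℝ × (Fin 3 → ℝ) => ut p.1 p.2 :=
    (hF1vC (1, 0)).comp hmk
  have hdiC : ∀ i, Continuous fun p : ℝ × (Fin 3 → ℝ) => di i p.1 p.2 := fun i =>
    (hF1vC (0, Pi.single i 1)).comp hmk
  have hdtiC : ∀ i, Continuous fun p : ℝ × (Fin 3 → ℝ) => dti i p.1 p.2 := fun i =>
    (hF2vC (1, 0) (0, Pi.single i 1)).comp hmk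
  have hdiiC : ∀ i, Continuous fun p : ℝ × (Fin 3 → ℝ) => dii i p.1 p.2 := fun i =>
    (hF2vC (0, Pi.single i 1) (0, Pi.single i 1)).comp hmk
  have huC : Continuous fun p : ℝ × (Fin 3 → ℝ) => u p.1 p.2 := hsmooth.continuous
  -- energies
  set M : ℝ → ℝ := fun t => ∫ x in Ω, (‖u t x‖) ^ 4 with hMdef
  set K : ℝ → ℝ := fun t => ∫ x in Ω, ∑ i, Complex.normSq (di i t x) with hKdef
  set M' : ℝ → ℝ := fun t => ∫ x in Ω, 4 * Complex.normSq (u t x) * Rp (ut t x) (u t x)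
    with hM'def
  have hRpC : ∀ {f g : ℝ × (Fin 3 → ℝ) → ℂ}, Continuous f → Continuous g →
      Continuous fun p => Rp (f p) (g p) := by
    intro f g hf hg
    unfold Rp
    exact ((Complex.continuous_re.comp hf).mul (Complex.continuous_re.comp hg)).add
      ((Complex.continuous_im.comp hf).mul (Complex.continuous_im.comp hg))
  have habs4 : ∀ z : ℂ, ‖z‖ ^ 4 = Complex.normSq z ^ 2 := fun z => by
    rw [show (4 : ℕ) = 2 * 2 from rfl, pow_mul, Complex.sq_norm]
  have hxC : ∀ {f : ℝ × (Fin 3 → ℝ) → ℂ} (t : ℝ), Continuous f →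
      Continuous fun y : Fin 3 → ℝ => f (t, y) := fun t hf =>
    hf.comp (Continuous.prodMk_right t)
  have hMd : ∀ t, HasDerivAt M (M' t) t := by
    intro t
    refine hasDerivAt_setIntegral_param (F' := fun t x =>
      4 * Complex.normSq (u t x) * Rp (ut t x) (u t x)) hΩc hΩm ?_ ?_ ?_ t
    · exact (continuous_norm.comp huC).pow 4
    · exact (continuous_const.mul (Complex.continuous_normSq.comp huC)).mul
        (hRpC hutC huC)
    · intro s x
      have h1 : HasDerivAt (fun s' => Complex.normSq (u s' x) ^ 2)
          (2 * Complex.normSq (u s x) ^ 1 * (2 * Rp (ut s x) (u s x))) s :=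
        (hasDerivAt_normSq_comp (hut s x)).pow 2
      have h2 : (fun s' => ‖u s' x‖ ^ 4)
          = fun s' => Complex.normSq (u s' x) ^ 2 := by
        funext s'; exact habs4 _
      rw [h2]
      convert h1 using 1; ring
  have hKd : ∀ t, HasDerivAt K (∫ x in Ω, ∑ i, 2 * Rp (dti i t x) (di i t x)) t := by
    intro t
    refine hasDerivAt_setIntegral_param (F' := fun t x =>
      ∑ i, 2 * Rp (dti i t x) (di i t x)) hΩc hΩm ?_ ?_ ?_ t
    · exact continuous_finset_sum _ fun i _ => Complex.continuous_normSq.comp (hdiC i)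
    · exact continuous_finset_sum _ fun i _ => continuous_const.mul (hRpC (hdtiC i) (hdiC i))
    · intro s x
      exact HasDerivAt.fun_sum fun i _ => hasDerivAt_normSq_comp (hdti i s x)
  -- integration by parts (divergence theorem)
  have hIBP : ∀ t, (∫ x in Ω,
      (Rp (∑ i, dii i t x) (ut t x) + ∑ i, Rp (dti i t x) (di i t x))) = 0 := by
    intro t
    -- translation invariance
    have hupdadd : ∀ (x : Fin 3 → ℝ) (j : Fin 3),
        Function.update x j (x j + L j) = x + L j • (Pi.single j 1 : Fin 3 → ℝ) := by
      intro x j; funext k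
      by_cases hk : k = j
      · subst hk; simp
      · simp [Function.update_of_ne hk, Pi.single_eq_of_ne hk]
    have hUper : ∀ (j : Fin 3) (p : ℝ × (Fin 3 → ℝ)),
        U (p + ((0:ℝ), L j • (Pi.single j 1 : Fin 3 → ℝ))) = U p := by
      intro j p
      show u (p.1 + 0) (p.2 + L j • (Pi.single j 1 : Fin 3 → ℝ)) = u p.1 p.2
      rw [add_zero, ← hupdadd p.2 j, hper]
    have hF1per : ∀ (j : Fin 3) (p : ℝ × (Fin 3 → ℝ)),
        F1 (p + ((0:ℝ), L j • (Pi.single j 1 : Fin 3 → ℝ))) = F1 p := by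
      intro j p
      have h1 : HasFDerivAt (fun q : ℝ × (Fin 3 → ℝ) => U (q + ((0:ℝ), L j • (Pi.single j 1 : Fin 3 → ℝ))))
          ((F1 (p + ((0:ℝ), L j • (Pi.single j 1 : Fin 3 → ℝ)))).comp
            (ContinuousLinearMap.id ℝ (ℝ × (Fin 3 → ℝ)))) p :=
        (hUdiff _).hasFDerivAt.comp p ((hasFDerivAt_id p).add_const _)
      have h2 : (fun q : ℝ × (Fin 3 → ℝ) => U (q + ((0:ℝ), L j • (Pi.single j 1 : Fin 3 → ℝ)))) = U := by
        funext q; exact hUper j q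
      rw [h2, ContinuousLinearMap.comp_id] at h1
      exact h1.fderiv.symm
    have htrans : ∀ (v : ℝ × (Fin 3 → ℝ)) (j : Fin 3) (y : Fin 3 → ℝ),
        F1 (t, y + L j • (Pi.single j 1 : Fin 3 → ℝ)) v = F1 (t, y) v := by
      intro v j y
      have h : ((t, y) + ((0:ℝ), L j • (Pi.single j 1 : Fin 3 → ℝ)) : ℝ × (Fin 3 → ℝ))
          = (t, y + L j • (Pi.single j 1 : Fin 3 → ℝ)) := by rw [Prod.mk_add_mk, add_zero]
      rw [← h, hF1per]
    -- the vector field and its derivative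
    set J : (Fin 3 → ℝ) →L[ℝ] ℝ × (Fin 3 → ℝ) :=
      ((0 : (Fin 3 → ℝ) →L[ℝ] ℝ)).prod (ContinuousLinearMap.id ℝ (Fin 3 → ℝ)) with hJdef
    have hpair : ∀ y : Fin 3 → ℝ,
        HasFDerivAt (fun z : Fin 3 → ℝ => ((t, z) : ℝ × (Fin 3 → ℝ))) J y :=
      fun y => (hasFDerivAt_const t y).prodMk (hasFDerivAt_id y)
    set Lv : (ℝ × (Fin 3 → ℝ)) → (Fin 3 → ℝ) → ((Fin 3 → ℝ) →L[ℝ] ℂ) :=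
      fun v y => ((ContinuousLinearMap.apply ℝ ℂ v).comp (fderiv ℝ F1 (t, y))).comp J
      with hLvdef
    have hVy : ∀ (v : ℝ × (Fin 3 → ℝ)) (y : Fin 3 → ℝ),
        HasFDerivAt (fun z => F1 (t, z) v) (Lv v y) y :=
      fun v y => (hF1v v (t, y)).comp y (hpair y)
    set f : (Fin 3 → ℝ) → (Fin 3 → ℝ) := fun y i => Rp (di i t y) (ut t y) with hfdef
    set Dc : Fin 3 → (Fin 3 → ℝ) → ((Fin 3 → ℝ) →L[ℝ] ℝ) := fun i y =>
      (di i t y).re • (Complex.reCLM.comp (Lv (1, 0) y))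
        + (ut t y).re • (Complex.reCLM.comp (Lv (0, Pi.single i 1) y))
        + ((di i t y).im • (Complex.imCLM.comp (Lv (1, 0) y))
          + (ut t y).im • (Complex.imCLM.comp (Lv (0, Pi.single i 1) y))) with hDcdef
    have hcomp : ∀ (i : Fin 3) (y : Fin 3 → ℝ), HasFDerivAt (fun z => f z i) (Dc i y) y := by
      intro i y
      have h1 : HasFDerivAt (fun z => (di i t z).re)
          (Complex.reCLM.comp (Lv (0, Pi.single i 1) y)) y :=
        Complex.reCLM.hasFDerivAt.comp y (hVy (0, Pi.single i 1) y)
      have h2 : HasFDerivAt (fun z => (ut t z).re)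
          (Complex.reCLM.comp (Lv (1, 0) y)) y :=
        Complex.reCLM.hasFDerivAt.comp y (hVy (1, 0) y)
      have h3 : HasFDerivAt (fun z => (di i t z).im)
          (Complex.imCLM.comp (Lv (0, Pi.single i 1) y)) y :=
        Complex.imCLM.hasFDerivAt.comp y (hVy (0, Pi.single i 1) y)
      have h4 : HasFDerivAt (fun z => (ut t z).im)
          (Complex.imCLM.comp (Lv (1, 0) y)) y :=
        Complex.imCLM.hasFDerivAt.comp y (hVy (1, 0) y)
      exact (h1.mul h2).add (h3.mul h4)
    set f' : (Fin 3 → ℝ) → ((Fin 3 → ℝ) →L[ℝ] (Fin 3 → ℝ)) :=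
      fun y => ContinuousLinearMap.pi (fun i => Dc i y) with hf'def
    have hfd : ∀ y, HasFDerivAt f (f' y) y := fun y =>
      hasFDerivAt_pi.2 fun i => hcomp i y
    -- evaluation of the divergence
    have hev : ∀ (i : Fin 3) (y : Fin 3 → ℝ), Dc i y (Pi.single i 1)
        = (di i t y).re * (dti i t y).re + (ut t y).re * (dii i t y).re
          + ((di i t y).im * (dti i t y).im + (ut t y).im * (dii i t y).im) := by
      intro i y
      have hsy := hsymm (t, y) ((0 : ℝ), Pi.single i 1) ((1 : ℝ), (0 : Fin 3 → ℝ))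
      simp only [hDcdef, hLvdef, hJdef, ContinuousLinearMap.add_apply,
        ContinuousLinearMap.smul_apply, ContinuousLinearMap.comp_apply,
        ContinuousLinearMap.prod_apply, ContinuousLinearMap.coe_id',
        ContinuousLinearMap.zero_apply, ContinuousLinearMap.apply_apply, id_eq,
        smul_eq_mul, Complex.reCLM_apply, Complex.imCLM_apply]
      rw [hsy]
    have hdiveq : ∀ y, (∑ i, f' y (Pi.single i (1:ℝ)) i)
        = Rp (∑ i, dii i t y) (ut t y) + ∑ i, Rp (dti i t y) (di i t y) := by
      intro y
      have h1 : ∀ i : Fin 3, f' y (Pi.single i (1:ℝ)) i = Dc i y (Pi.single i 1) := fun i => by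
        rw [hf'def]; exact ContinuousLinearMap.pi_apply _ _ _
      rw [Finset.sum_congr rfl fun i _ => (h1 i).trans (hev i y)]
      unfold Rp
      rw [Complex.re_sum, Complex.im_sum, Finset.sum_mul, Finset.sum_mul,
        ← Finset.sum_add_distrib, ← Finset.sum_add_distrib]
      exact Finset.sum_congr rfl fun i _ => by ring
    -- continuity of everything in x
    have hfc : ContinuousOn f (Set.Icc (0 : Fin 3 → ℝ) L) := by
      refine Continuous.continuousOn (continuous_pi fun i => ?_)
      simp only [hfdef]
      unfold Rp
      exact ((Complex.continuous_re.comp (hxC t (hdiC i))).mul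
          (Complex.continuous_re.comp (hxC t hutC))).add
        ((Complex.continuous_im.comp (hxC t (hdiC i))).mul
          (Complex.continuous_im.comp (hxC t hutC)))
    have hgc2 : Continuous fun y : Fin 3 → ℝ =>
        Rp (∑ i, dii i t y) (ut t y) + ∑ i, Rp (dti i t y) (di i t y) := by
      unfold Rp
      refine Continuous.add (Continuous.add (Continuous.mul ?_ ?_) (Continuous.mul ?_ ?_))
        (continuous_finset_sum _ fun i _ => Continuous.add (Continuous.mul ?_ ?_)
          (Continuous.mul ?_ ?_))
      · exact Complex.continuous_re.comp (continuous_finset_sum _ fun i _ => hxC t (hdiiC i))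
      · exact Complex.continuous_re.comp (hxC t hutC)
      · exact Complex.continuous_im.comp (continuous_finset_sum _ fun i _ => hxC t (hdiiC i))
      · exact Complex.continuous_im.comp (hxC t hutC)
      · exact Complex.continuous_re.comp (hxC t (hdtiC i))
      · exact Complex.continuous_re.comp (hxC t (hdiC i))
      · exact Complex.continuous_im.comp (hxC t (hdtiC i))
      · exact Complex.continuous_im.comp (hxC t (hdiC i))
    have hIi : IntegrableOn (fun x => ∑ i, f' x (Pi.single i (1:ℝ)) i)
        (Set.Icc (0 : Fin 3 → ℝ) L) := by
      have : (fun x => ∑ i, f' x (Pi.single i (1:ℝ)) i) = fun y =>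
          Rp (∑ i, dii i t y) (ut t y) + ∑ i, Rp (dti i t y) (di i t y) := funext hdiveq
      rw [this]
      exact hgc2.continuousOn.integrableOn_compact isCompact_Icc
    have hle : (0 : Fin 3 → ℝ) ≤ L := fun i => (hL i).le
    have hdivthm := MeasureTheory.integral_divergence_of_hasFDerivAt_off_countable
      (n := 2) (a := (0 : Fin 3 → ℝ)) (b := L) hle f f' ∅ Set.countable_empty hfc
      (fun x _ => hfd x) hIi
    -- the boundary terms cancel by periodicity
    have hins : ∀ (i : Fin 3) (y : Fin 2 → ℝ),
        i.insertNth (L i) y = i.insertNth ((0 : Fin 3 → ℝ) i) y + L i • (Pi.single i 1 : Fin 3 → ℝ) := by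
      intro i y; funext k
      by_cases hk : k = i
      · subst hk
        simp [Fin.insertNth_apply_same, Pi.single_eq_same]
      · obtain ⟨m, hm⟩ := Fin.exists_succAbove_eq hk
        rw [← hm]
        simp [Fin.insertNth_apply_succAbove, Pi.single_eq_of_ne (Fin.succAbove_ne i m)]
    have hface : ∀ (i : Fin 3) (y : Fin 2 → ℝ),
        f (i.insertNth (L i) y) i = f (i.insertNth ((0 : Fin 3 → ℝ) i) y) i := by
      intro i y
      rw [hins i y]
      show Rp (F1 (t, _ + L i • (Pi.single i 1 : Fin 3 → ℝ)) (0, Pi.single i 1))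
          (F1 (t, _ + L i • (Pi.single i 1 : Fin 3 → ℝ)) (1, 0)) = _
      rw [htrans, htrans]
    have hfaces : (∑ i : Fin 3,
        ((∫ x in Set.Icc ((0 : Fin 3 → ℝ) ∘ i.succAbove) (L ∘ i.succAbove),
            f (i.insertNth (L i) x) i)
          - ∫ x in Set.Icc ((0 : Fin 3 → ℝ) ∘ i.succAbove) (L ∘ i.succAbove),
            f (i.insertNth ((0 : Fin 3 → ℝ) i) x) i)) = 0 := by
      refine Finset.sum_eq_zero fun i _ => ?_
      rw [show (fun x : Fin 2 → ℝ => f (i.insertNth (L i) x) i)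
        = fun x => f (i.insertNth ((0 : Fin 3 → ℝ) i) x) i from funext (hface i)]
      exact sub_self _
    have h0 : (∫ x in Set.Icc (0 : Fin 3 → ℝ) L, ∑ i, f' x (Pi.single i (1:ℝ)) i) = 0 := by
      rw [hdivthm]; exact hfaces
    rw [hΩIcc]
    have hfin : ∀ x : Fin 3 → ℝ, Rp (∑ i, dii i t x) (ut t x) + ∑ i, Rp (dti i t x) (di i t x)
        = ∑ i, f' x (Pi.single i (1:ℝ)) i := fun x => (hdiveq x).symm
    simp only [hfin]
    exact h0
  -- pointwise PDE consequence
  have key1 : ∀ t x, Rp (∑ i, dii i t x) (ut t x)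
      = -(β * Real.exp (-2*γ*t)) * (Complex.normSq (u t x) * Rp (ut t x) (u t x)) := by
    intro t x
    have h := hpde t x
    rw [hlap t x, (hut t x).deriv] at h
    have hexpc : Complex.exp (-2 * (γ : ℂ) * (t : ℂ)) = ((Real.exp (-2 * γ * t) : ℝ) : ℂ) := by
      rw [Complex.ofReal_exp]; congr 1; push_cast; ring
    have habs2 : ((‖u t x‖ : ℂ)) ^ 2 = ((Complex.normSq (u t x) : ℝ) : ℂ) := by
      rw [← Complex.ofReal_pow, Complex.sq_norm]
    rw [hexpc, habs2] at h
    obtain ⟨r, hr⟩ : ∃ r : ℝ, r = β * Real.exp (-2 * γ * t) * Complex.normSq (u t x) :=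
      ⟨_, rfl⟩
    have h3 : ((r : ℝ) : ℂ) = (β : ℂ) * ((Real.exp (-2 * γ * t) : ℝ) : ℂ)
        * ((Complex.normSq (u t x) : ℝ) : ℂ) := by rw [hr]; push_cast; ring
    have h2 : (∑ i, dii i t x) = -(Complex.I * ut t x) - (r : ℂ) * u t x := by
      rw [h3]; linear_combination h
    rw [h2]
    unfold Rp
    simp only [Complex.sub_re, Complex.sub_im, Complex.neg_re, Complex.neg_im,
      Complex.mul_re, Complex.mul_im, Complex.I_re, Complex.I_im,
      Complex.ofReal_re, Complex.ofReal_im]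
    rw [hr]
    ring
  -- combine: K' = (β/2) e^{-2γt} M'
  have hKd' : ∀ t, HasDerivAt K ((β/2) * Real.exp (-2*γ*t) * M' t) t := by
    intro t
    have h := hKd t
    have hg1c : Continuous fun x : Fin 3 → ℝ => Rp (∑ i, dii i t x) (ut t x) := by
      unfold Rp
      refine Continuous.add (Continuous.mul ?_ ?_) (Continuous.mul ?_ ?_)
      · exact Complex.continuous_re.comp (continuous_finset_sum _ fun i _ => hxC t (hdiiC i))
      · exact Complex.continuous_re.comp (hxC t hutC)
      · exact Complex.continuous_im.comp (continuous_finset_sum _ fun i _ => hxC t (hdiiC i))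
      · exact Complex.continuous_im.comp (hxC t hutC)
    have hg2c : Continuous fun x : Fin 3 → ℝ => ∑ i, Rp (dti i t x) (di i t x) := by
      refine continuous_finset_sum _ fun i _ => ?_
      unfold Rp
      exact ((Complex.continuous_re.comp (hxC t (hdtiC i))).mul
          (Complex.continuous_re.comp (hxC t (hdiC i)))).add
        ((Complex.continuous_im.comp (hxC t (hdtiC i))).mul
          (Complex.continuous_im.comp (hxC t (hdiC i))))
    have hint1 : IntegrableOn (fun x => Rp (∑ i, dii i t x) (ut t x)) Ω :=
      hg1c.continuousOn.integrableOn_compact hΩc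
    have hint2 : IntegrableOn (fun x => ∑ i, Rp (dti i t x) (di i t x)) Ω :=
      hg2c.continuousOn.integrableOn_compact hΩc
    have hsplit : (∫ x in Ω, Rp (∑ i, dii i t x) (ut t x))
        + (∫ x in Ω, ∑ i, Rp (dti i t x) (di i t x)) = 0 := by
      rw [← integral_add hint1 hint2]; exact hIBP t
    have e2 : (∫ x in Ω, ∑ i, 2 * Rp (dti i t x) (di i t x))
        = 2 * ∫ x in Ω, ∑ i, Rp (dti i t x) (di i t x) := by
      rw [← integral_const_mul]
      congr 1; funext x; rw [Finset.mul_sum]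
    have e1 : (∫ x in Ω, Rp (∑ i, dii i t x) (ut t x))
        = -(β * Real.exp (-2*γ*t))
          * ∫ x in Ω, Complex.normSq (u t x) * Rp (ut t x) (u t x) := by
      rw [← integral_const_mul]
      congr 1; funext x; exact key1 t x
    have e3 : M' t = 4 * ∫ x in Ω, Complex.normSq (u t x) * Rp (ut t x) (u t x) := by
      rw [← integral_const_mul]
      show (∫ x in Ω, 4 * Complex.normSq (u t x) * Rp (ut t x) (u t x)) = _
      congr 1; funext x; ring
    rw [e1] at hsplit
    convert h using 1
    rw [e2, e3]
    linear_combination (-2 : ℝ) * hsplit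
  -- energy constant
  set E : ℝ → ℝ := fun t => K t - (β/2) * Real.exp (-2*γ*t) * M t
    - γ * β * ∫ ν in (0:ℝ)..t, Real.exp (-2*γ*ν) * M ν with hEdef
  have hMcont : Continuous M := continuous_iff_continuousAt.2 fun t => (hMd t).continuousAt
  have hgc : Continuous fun ν => Real.exp (-2*γ*ν) * M ν :=
    (Real.continuous_exp.comp (continuous_const.mul continuous_id)).mul hMcont
  have hE : ∀ t, HasDerivAt E 0 t := by
    intro t
    have hexp : HasDerivAt (fun s : ℝ => Real.exp (-2*γ*s))
        (Real.exp (-2*γ*t) * (-2*γ)) t := by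
      have h0 : HasDerivAt (fun s : ℝ => -2*γ*s) (-2*γ) t := by
        simpa using (hasDerivAt_id t).const_mul (-2*γ)
      exact h0.exp
    have hFTC : HasDerivAt (fun s => ∫ ν in (0:ℝ)..s, Real.exp (-2*γ*ν) * M ν)
        (Real.exp (-2*γ*t) * M t) t :=
      intervalIntegral.integral_hasDerivAt_right (hgc.intervalIntegrable 0 t)
        (hgc.stronglyMeasurableAtFilter volume (nhds t)) hgc.continuousAt
    have h2 := (hexp.const_mul (β/2)).mul (hMd t)
    have h3 := hFTC.const_mul (γ*β)
    have := ((hKd' t).sub h2).sub h3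
    refine this.congr_deriv ?_
    ring
  have hconst : ∀ t, E t = E 0 := fun t =>
    is_const_of_deriv_eq_zero (fun s => (hE s).differentiableAt) (fun s => (hE s).deriv) t 0
  -- final translation
  intro t ht
  have eK : ∀ s : ℝ, (∫ x in Ω, ∑ i, Complex.normSq (pd i (u s) x)) = K s := fun s => by
    simp only [hpd]; rfl
  have eM : ∀ s : ℝ, (∫ x in Ω, (‖u s x‖) ^ 4) = M s := fun s => rfl
  have hIcc : ∀ s : ℝ, 0 ≤ s → (∫ ν in Set.Icc (0:ℝ) s, Real.exp (-2*γ*ν) * M ν)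
      = ∫ ν in (0:ℝ)..s, Real.exp (-2*γ*ν) * M ν := fun s hs => by
    rw [intervalIntegral.integral_of_le hs, integral_Icc_eq_integral_Ioc]
  have hc := hconst t
  simp only [hEdef] at hc
  simp only [eK, eM]
  rw [hIcc t ht, hIcc 0 le_rfl]
  exact hc
end

section
/- Let A be an N×N Hermitian matrix (discrete Laplacian Δ_h) and let U^{n+1}, U^n, U^{n-1} ∈ ℂᴺ satisfy i(U^{n+1}-U^{n-1})/(2τ) + A·Û^n + c·|U^n|²·Û^n = 0 componentwise, where Û^n = (U^{n+1}+U^{n-1})/2, c ∈ ℝ, τ > 0, and |U^n|² denotes the vector of squared moduli. Then ‖U^{n+1}‖² = ‖U^{n-1}‖² in the standard (weighted) ℓ²-norm. -/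
/-!
The scheme reads `i (U⁺ - U⁻) = -τ B (U⁺ + U⁻)` with `B = A + c · diag |Uⁿ|²` Hermitian, because
the lagged coefficient `|Uⁿ|²` is real. Pairing with `U⁺ + U⁻` makes `i ⟨U⁺ + U⁻, U⁺ - U⁻⟩` real,
so `⟨U⁺ + U⁻, U⁺ - U⁻⟩` is purely imaginary; its real part is `‖U⁺‖² - ‖U⁻‖²`.
-/

open Matrix

theorem Matrix.re_star_add_dotProduct_sub {n : Type*} [Fintype n] (u w : n → ℂ) :
    (star (u + w) ⬝ᵥ (u - w)).re = ∑ j, Complex.normSq (u j) - ∑ j, Complex.normSq (w j) := by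
  simp only [dotProduct, Complex.re_sum, ← Finset.sum_sub_distrib]
  refine Finset.sum_congr rfl fun j _ => ?_
  simp only [Pi.star_apply, Pi.add_apply, Pi.sub_apply, Complex.star_def, Complex.mul_re,
    Complex.add_re, Complex.sub_re, Complex.add_im, Complex.sub_im, Complex.conj_re,
    Complex.conj_im, Complex.normSq_apply]
  ring

theorem Matrix.IsHermitian.sum_normSq_eq_of_I_smul_sub_eq_mulVec_add {n : Type*} [Fintype n]
    {B : Matrix n n ℂ} (hB : B.IsHermitian) {u w : n → ℂ}
    (h : Complex.I • (u - w) = B *ᵥ (u + w)) :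
    ∑ j, Complex.normSq (u j) = ∑ j, Complex.normSq (w j) := by
  have hreal : (Complex.I * (star (u + w) ⬝ᵥ (u - w))).im = 0 := by
    rw [← smul_eq_mul, ← dotProduct_smul, h]
    exact hB.im_star_dotProduct_mulVec_self _
  rw [Complex.I_mul_im, re_star_add_dotProduct_sub] at hreal
  linarith

/-- Discrete mass conservation of the linearly implicit scheme:
if `i(U^{n+1}-U^{n-1})/(2τ) + A Û^n + c |U^n|² Û^n = 0` with `A` Hermitian,
then `‖U^{n+1}‖² = ‖U^{n-1}‖²`. -/
theorem discrete_mass_conservation {N : ℕ}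
    (A : Matrix (Fin N) (Fin N) ℂ) (hA : A.IsHermitian)
    (τ c : ℝ) (hτ : 0 < τ) (Up Un Um : Fin N → ℂ)
    (hscheme : ∀ j, Complex.I * ((Up j - Um j) / (2 * (τ : ℂ)))
      + (A *ᵥ fun i => (Up i + Um i) / 2) j
      + (c : ℂ) * ((Complex.normSq (Un j) : ℂ)) * ((Up j + Um j) / 2) = 0) :
    ∑ j, Complex.normSq (Up j) = ∑ j, Complex.normSq (Um j) := by
  set D : Matrix (Fin N) (Fin N) ℂ := diagonal fun j => ((c * Complex.normSq (Un j) : ℝ) : ℂ)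
  have hD : D.IsHermitian := isHermitian_diagonal_iff.mpr fun j => Complex.conj_ofReal _
  refine ((hA.add hD).smul (IsSelfAdjoint.all (-τ))).sum_normSq_eq_of_I_smul_sub_eq_mulVec_add ?_
  have hmid : (fun i => (Up i + Um i) / 2) = (2⁻¹ : ℂ) • (Up + Um) := by
    funext i; simp [div_eq_inv_mul]
  have hτ0 : (τ : ℂ) ≠ 0 := Complex.ofReal_ne_zero.mpr hτ.ne'
  funext j
  have hj := hscheme j
  rw [hmid, mulVec_smul] at hj
  simp only [smul_mulVec, add_mulVec, Pi.smul_apply, Pi.add_apply, Pi.sub_apply, mulVec_diagonal, D,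
    smul_eq_mul, Complex.real_smul] at hj ⊢
  field_simp at hj
  push_cast
  linear_combination hj
end

section
/- Let A be an N×N Hermitian matrix with ⟨-Av,v⟩ ≥ 0, and suppose U^{n+1}, U^n, U^{n-1} ∈ ℂᴺ satisfy i(U^{n+1}-U^{n-1})/(2τ) + A·Û^n + c_n·|U^n|²·Û^n = 0 with Û^n = (U^{n+1}+U^{n-1})/2 and c_n = βe^{-2γt_n}. Taking the real part of the inner product with -(U^{n+1}-U^{n-1})/τ yields (1/2)|U^{n+1}|_A² - (1/2)|U^{n-1}|_A² - (c_n/2)∑_j(|U_j^n|²|U_j^{n+1}|² - |U_j^n|²|U_j^{n-1}|²) = 0, where |v|_A² = ⟨-Av,v⟩. -/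
open Matrix

/-- Discrete local energy identity of the linearly implicit scheme:
taking the real part of the inner product of the scheme with
`-(U^{n+1}-U^{n-1})/τ` yields
`(1/2)|U^{n+1}|_A² − (1/2)|U^{n-1}|_A²
  − (c/2)∑_j(|U_j^n|²|U_j^{n+1}|² − |U_j^n|²|U_j^{n-1}|²) = 0`,
where `|v|_A² = ⟨-A v, v⟩`. -/
theorem discrete_energy_identity {N : ℕ}
    (A : Matrix (Fin N) (Fin N) ℂ) (hA : A.IsHermitian)
    (hpos : ∀ v : Fin N → ℂ, 0 ≤ (star v ⬝ᵥ (-A) *ᵥ v).re)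
    (τ β γ tn c : ℝ) (hτ : 0 < τ) (hc : c = β * Real.exp (-2 * γ * tn))
    (Up Un Um : Fin N → ℂ)
    (hscheme : ∀ j, Complex.I * ((Up j - Um j) / (2 * (τ : ℂ)))
      + (A *ᵥ fun i => (Up i + Um i) / 2) j
      + (c : ℂ) * ((Complex.normSq (Un j) : ℂ)) * ((Up j + Um j) / 2) = 0) :
    (1 / 2) * (star Up ⬝ᵥ (-A) *ᵥ Up).re - (1 / 2) * (star Um ⬝ᵥ (-A) *ᵥ Um).re
      - (c / 2) * ∑ j, (Complex.normSq (Un j) * Complex.normSq (Up j)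
          - Complex.normSq (Un j) * Complex.normSq (Um j)) = 0 := by
  classical
  set conj' := (starRingEnd ℂ)
  -- the three pieces of the inner product of the scheme with U^{n+1}-U^{n-1}
  set S1 : ℂ := ∑ j, conj' (Up j - Um j) * (Complex.I * ((Up j - Um j) / (2 * (τ : ℂ)))) with hS1def
  set S2 : ℂ := ∑ j, conj' (Up j - Um j) * (A *ᵥ fun i => (Up i + Um i) / 2) j with hS2def
  set S3 : ℂ := ∑ j, conj' (Up j - Um j) *
      ((c : ℂ) * ((Complex.normSq (Un j) : ℂ)) * ((Up j + Um j) / 2)) with hS3def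
  have hsum : S1 + S2 + S3 = 0 := by
    rw [hS1def, hS2def, hS3def, ← Finset.sum_add_distrib, ← Finset.sum_add_distrib]
    refine Finset.sum_eq_zero fun j _ => ?_
    rw [← mul_add, ← mul_add, hscheme j, mul_zero]
  -- real part of S1 vanishes
  have hS1 : S1.re = 0 := by
    rw [hS1def, Complex.re_sum]
    refine Finset.sum_eq_zero fun j _ => ?_
    have : conj' (Up j - Um j) * (Complex.I * ((Up j - Um j) / (2 * (τ : ℂ))))
        = Complex.I * ((Complex.normSq (Up j - Um j) / (2 * τ) : ℝ) : ℂ) := by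
      have h1 : (Up j - Um j) * conj' (Up j - Um j)
          = (Complex.normSq (Up j - Um j) : ℂ) := Complex.mul_conj _
      push_cast
      rw [← h1]; ring
    rw [this]
    simp [Complex.mul_re, Complex.mul_im, Complex.div_im, Complex.div_re]
  -- real part of S2
  have hτ0 : (2 * (τ : ℂ)) ≠ 0 := by
    simp [Complex.ofReal_ne_zero, ne_of_gt hτ]
  have hmv : ∀ j, (A *ᵥ fun i => (Up i + Um i) / 2) j
      = ((A *ᵥ Up) j + (A *ᵥ Um) j) / 2 := by
    intro j
    simp only [mulVec, dotProduct]
    rw [← Finset.sum_add_distrib, Finset.sum_div]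
    congr 1; funext k; ring
  have hS2 : S2 = (star Up ⬝ᵥ A *ᵥ Up - star Um ⬝ᵥ A *ᵥ Um
      + (star Up ⬝ᵥ A *ᵥ Um - star Um ⬝ᵥ A *ᵥ Up)) / 2 := by
    rw [hS2def]
    have : ∀ j, conj' (Up j - Um j) * (A *ᵥ fun i => (Up i + Um i) / 2) j
        = (conj' (Up j) * (A *ᵥ Up) j - conj' (Um j) * (A *ᵥ Um) j
          + (conj' (Up j) * (A *ᵥ Um) j - conj' (Um j) * (A *ᵥ Up) j)) / 2 := by
      intro j
      rw [hmv j, map_sub]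
      ring
    rw [Finset.sum_congr rfl fun j _ => this j]
    simp only [dotProduct, Pi.star_apply, RCLike.star_def]
    rw [← Finset.sum_div]
    congr 1
    rw [Finset.sum_add_distrib, Finset.sum_sub_distrib, Finset.sum_sub_distrib]
  have hcross : star Um ⬝ᵥ A *ᵥ Up = conj' (star Up ⬝ᵥ A *ᵥ Um) := by
    have h1 : conj' (star Up ⬝ᵥ A *ᵥ Um) = star (star Up ⬝ᵥ A *ᵥ Um) := rfl
    rw [h1, ← star_dotProduct, star_mulVec, hA.eq, dotProduct_mulVec]
  have hS2re : S2.re = ((star Up ⬝ᵥ A *ᵥ Up).re - (star Um ⬝ᵥ A *ᵥ Um).re) / 2 := by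
    rw [hS2, hcross]
    rw [Complex.div_ofNat_re]
    simp [conj', Complex.add_re, Complex.sub_re]
  -- real part of S3
  have hS3 : S3.re = (c / 2) * ∑ j, (Complex.normSq (Un j) * Complex.normSq (Up j)
      - Complex.normSq (Un j) * Complex.normSq (Um j)) := by
    rw [hS3def, Complex.re_sum, Finset.mul_sum]
    refine Finset.sum_congr rfl fun j _ => ?_
    have h1 : conj' (Up j - Um j) * ((c : ℂ) * ((Complex.normSq (Un j) : ℂ)) * ((Up j + Um j) / 2))
        = ((c * Complex.normSq (Un j) / 2 : ℝ) : ℂ) *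
            (((Complex.normSq (Up j) : ℝ) : ℂ) - ((Complex.normSq (Um j) : ℝ) : ℂ))
          + ((c * Complex.normSq (Un j) / 2 : ℝ) : ℂ) *
            (conj' (Up j) * Um j - conj' (conj' (Up j) * Um j)) := by
      have ha : Up j * conj' (Up j) = (Complex.normSq (Up j) : ℂ) := Complex.mul_conj _
      have hb : Um j * conj' (Um j) = (Complex.normSq (Um j) : ℂ) := Complex.mul_conj _
      have hcc : conj' (conj' (Up j) * Um j) = Up j * conj' (Um j) := by
        rw [_root_.map_mul, Complex.conj_conj]
      push_cast
      rw [hcc, ← ha, ← hb, map_sub]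
      ring
    rw [h1]
    simp only [conj', Complex.add_re, Complex.mul_re, Complex.mul_im, Complex.ofReal_re,
      Complex.ofReal_im, Complex.sub_re, Complex.sub_im, Complex.conj_re, Complex.conj_im]
    ring
  -- put things together
  have h0 : S1.re + S2.re + S3.re = 0 := by
    have := congrArg Complex.re hsum
    simpa [Complex.add_re] using this
  have hnegUp : (star Up ⬝ᵥ (-A) *ᵥ Up) = -(star Up ⬝ᵥ A *ᵥ Up) := by
    rw [neg_mulVec, dotProduct_neg]
  have hnegUm : (star Um ⬝ᵥ (-A) *ᵥ Um) = -(star Um ⬝ᵥ A *ᵥ Um) := by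
    rw [neg_mulVec, dotProduct_neg]
  rw [hnegUp, hnegUm]
  rw [hS1, hS2re, hS3] at h0
  simp only [Complex.neg_re]
  linarith
end
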